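/- Let V be a symmetric positive definite d × d real matrix and a a symmetric positive semidefinite d × d real matrix. Fix ξ ∈ ℝ^d with ξ ≠ 0, and set κ = √V ξ, θ = κ/|κ|², ζ = √V θ. Then (ξ, ζ) = 1 and tr(aV) ≥ (Vξ, ξ)·(aζ, ζ). -/

import Mathlib

/-!
With `S = √V` and `c = |Sξ|² = (Vξ, ξ)` one has `ζ = Vξ / c`, whence `(ξ, ζ) = 1`. For the
inequality, `(aVξ, Vξ) = (SaS κ, κ) ≤ |κ|² tr(SaS) = c · tr(aV)`, using that a positive
semidefinite `M = BᵀB` satisfies `(Mx, x) = |Bx|² ≤ |x|² tr M` by Cauchy–Schwarz row by row.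
-/

open Matrix

section OldSqrt

open scoped ComplexOrder

/-- The square root of a positive semidefinite matrix, as defined in Mathlib (Dec 2024). -/
noncomputable def Matrix.PosSemidef.sqrt {n : Type*} [Fintype n] [DecidableEq n] {𝕜 : Type*}
    [RCLike 𝕜] {A : Matrix n n 𝕜} (hA : A.PosSemidef) : Matrix n n 𝕜 :=
  hA.1.eigenvectorUnitary.1 * diagonal ((↑) ∘ Real.sqrt ∘ hA.1.eigenvalues) *
    (star hA.1.eigenvectorUnitary : Matrix n n 𝕜)

end OldSqrt

namespace Matrix.PosSemidef

open scoped ComplexOrder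

variable {n 𝕜 : Type*} [Fintype n] [DecidableEq n] [RCLike 𝕜] {A : Matrix n n 𝕜}

theorem sqrt_eq_cfc (hA : A.PosSemidef) : hA.sqrt = cfc Real.sqrt A := by
  rw [hA.isHermitian.cfc_eq]
  rfl

theorem isHermitian_sqrt (hA : A.PosSemidef) : hA.sqrt.IsHermitian := by
  rw [sqrt_eq_cfc]
  exact cfc_predicate Real.sqrt A

theorem sqrt_mul_self (hA : A.PosSemidef) : hA.sqrt * hA.sqrt = A := by
  have hA' : IsSelfAdjoint A := hA.isHermitian
  rw [sqrt_eq_cfc, ← cfc_mul Real.sqrt Real.sqrt A]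
  conv_rhs => rw [← cfc_id' ℝ A]
  refine cfc_congr fun x hx => ?_
  rw [hA.isHermitian.spectrum_real_eq_range_eigenvalues] at hx
  obtain ⟨i, rfl⟩ := hx
  exact Real.mul_self_sqrt (hA.eigenvalues_nonneg i)

end Matrix.PosSemidef

namespace Matrix

open scoped MatrixOrder

variable {m n : Type*} [Fintype m] [Fintype n]

theorem transpose_mul_self_mulVec_dotProduct_le (B : Matrix m n ℝ) (x : n → ℝ) :
    ((Bᵀ * B) *ᵥ x) ⬝ᵥ x ≤ (Bᵀ * B).trace * (x ⬝ᵥ x) := by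
  have row_le (i : m) : (B *ᵥ x) i * (B *ᵥ x) i ≤ (B * Bᵀ) i i * (x ⬝ᵥ x) := by
    simpa [mulVec, mul_apply, dotProduct, sq] using
      Finset.sum_mul_sq_le_sq_mul_sq Finset.univ (B i) x
  rw [← mulVec_mulVec, mulVec_transpose, ← dotProduct_mulVec, trace_mul_comm]
  simpa only [trace, diag, dotProduct, Finset.sum_mul] using
    Finset.sum_le_sum fun i _ => row_le i

theorem PosSemidef.mulVec_dotProduct_le {M : Matrix n n ℝ} (hM : M.PosSemidef)
    (x : n → ℝ) : (M *ᵥ x) ⬝ᵥ x ≤ M.trace * (x ⬝ᵥ x) := by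
  classical
  obtain ⟨B, rfl⟩ := CStarAlgebra.nonneg_iff_eq_star_mul_self.mp hM.nonneg
  simpa only [star_eq_conjTranspose, conjTranspose_eq_transpose_of_trivial] using
    transpose_mul_self_mulVec_dotProduct_le B x

theorem PosSemidef.mulVec_mulVec_dotProduct_le {A : Matrix n n ℝ}
    (hA : A.PosSemidef) (B : Matrix n m ℝ) (x : m → ℝ) :
    (A *ᵥ (B *ᵥ x)) ⬝ᵥ (B *ᵥ x) ≤ (A * (B * Bᵀ)).trace * (x ⬝ᵥ x) := by
  have hBAB : (Bᵀ * A * B).PosSemidef := by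
    simpa only [conjTranspose_eq_transpose_of_trivial] using hA.conjTranspose_mul_mul_same B
  calc (A *ᵥ (B *ᵥ x)) ⬝ᵥ (B *ᵥ x) = ((Bᵀ * A * B) *ᵥ x) ⬝ᵥ x := by
        rw [← mulVec_mulVec, ← mulVec_mulVec, mulVec_transpose, ← dotProduct_mulVec]
    _ ≤ (Bᵀ * A * B).trace * (x ⬝ᵥ x) := hBAB.mulVec_dotProduct_le x
    _ = (A * (B * Bᵀ)).trace * (x ⬝ᵥ x) := by
        rw [trace_mul_comm, ← Matrix.mul_assoc, trace_mul_comm]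

end Matrix

/-- The square-root trick: for `V` symmetric positive definite, `a` positive semidefinite,
`ξ ≠ 0`, setting `κ = √V ξ`, `θ = κ/|κ|²`, `ζ = √V θ`, one has `(ξ, ζ) = 1` and
`tr(aV) ≥ (Vξ, ξ)·(aζ, ζ)`. -/
theorem trace_mul_ge_quadratic_form {d : ℕ} (V a : Matrix (Fin d) (Fin d) ℝ)
    (hV : V.PosDef) (ha : a.PosSemidef) (ξ : Fin d → ℝ) (hξ : ξ ≠ 0) :
    let κ : Fin d → ℝ := hV.posSemidef.sqrt *ᵥ ξ
    let θ : Fin d → ℝ := (κ ⬝ᵥ κ)⁻¹ • κ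
    let ζ : Fin d → ℝ := hV.posSemidef.sqrt *ᵥ θ
    ξ ⬝ᵥ ζ = 1 ∧ (V *ᵥ ξ) ⬝ᵥ ξ * ((a *ᵥ ζ) ⬝ᵥ ζ) ≤ (a * V).trace := by
  intro κ θ ζ
  set S := hV.posSemidef.sqrt
  have hSS : S * S = V := hV.posSemidef.sqrt_mul_self
  have hSt : S.IsSymm := by simpa using hV.posSemidef.isHermitian_sqrt
  have hSκ : S *ᵥ κ = V *ᵥ ξ := by rw [mulVec_mulVec, hSS]
  set c := (V *ᵥ ξ) ⬝ᵥ ξ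
  have hκκ : κ ⬝ᵥ κ = c := by
    rw [dotProduct_comm, dotProduct_mulVec, ← mulVec_transpose, hSt.eq, hSκ]
  have hζ : ζ = c⁻¹ • (V *ᵥ ξ) := by
    rw [← hκκ, ← hSκ]
    exact mulVec_smul S _ κ
  have hc : 0 < c := by simpa [c, dotProduct_comm] using hV.dotProduct_mulVec_pos hξ
  have hquad : (a *ᵥ (V *ᵥ ξ)) ⬝ᵥ (V *ᵥ ξ) ≤ (a * V).trace * c := by
    simpa only [hSκ, hSt.eq, hSS, hκκ] using ha.mulVec_mulVec_dotProduct_le S κ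
  rw [hζ]
  simp only [mulVec_smul, dotProduct_smul, smul_dotProduct, smul_eq_mul]
  refine ⟨by rw [dotProduct_comm, inv_mul_cancel₀ hc.ne'], ?_⟩
  rw [← mul_assoc, mul_inv_cancel₀ hc.ne', one_mul, inv_mul_le_iff₀ hc, mul_comm c]
  exact hquad
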